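/- arXiv:0807.1217 — 2 statements merged into one kernel-verified Lean document; each statement's English description precedes it below -/
import Mathlib

section
/- Every finite poset with a global minimum whose cover graph admits a U-coloring is an upper locally distributive lattice: it is a lattice in which every element x has a unique inclusion-minimal set M_x of meet-irreducible elements with x = ⋀ M_x. -/
def UColoring {V κ : Type*} (A : V → V → Prop) (c : V → V → κ) : Prop :=
  (∀ v u w : V, A v u → A v w → u ≠ w → c v u ≠ c v w) ∧
  (∀ v u w : V, A v u → A v w → u ≠ w →
    ∃ z : V, A u z ∧ A w z ∧ c v u = c w z ∧ c v w = c u z)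

/-- An element of a poset is meet-irreducible if it has exactly one upper
cover or is the maximum. -/
def MeetIrred {P : Type*} [PartialOrder P] (m : P) : Prop :=
  (∃! u : P, m ⋖ u) ∨ (∀ a : P, a ≤ m)

/-!
By (U2), an edge `x ⋖ u` lifts, keeping its color, to an edge `w ⋖ p` with `u ≤ p` for every
`w ≥ x` not above `u`. The heart of the proof is that the top of a U-diamond is the join of its
two sides. This is shown by downward induction on the base of the diamond, simultaneously with
the fact that two distinct upper covers of `t` have meet `t` (each by a further downward
induction on the bound): if the top `z` of a diamond over `v` were not below a common upper bound
`t` of its sides, the two sides of the diamond would lift to two covers of `t` of distinct colors,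
both above `z`, whose meet is `t`.

Hence the lift `p` is the join of `u` and `w`, and every cover of `w` above `u` has the color of
`x ⋖ u`. This yields binary joins, so with `⊥` the poset is a lattice. For a cover `x ⋖ u` the
elements above `x` avoiding `u` have a greatest element `m_u`, which is meet-irreducible, and
comparing colors shows that a meet-irreducible `a ≥ x` avoiding `u` is `m_u` itself. Therefore
`{m_u | x ⋖ u}` represents `x` and lies in every representation of `x` by meet-irreducibles.
-/

section PairBounds

variable {P : Type*} [PartialOrder P]

theorem mem_upperBounds_pair {a b r : P} : r ∈ upperBounds {a, b} ↔ a ≤ r ∧ b ≤ r := by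
  simp

theorem isLUB_pair_of_le {a b : P} (h : a ≤ b) : IsLUB {a, b} b :=
  ⟨mem_upperBounds_pair.2 ⟨h, le_rfl⟩, fun _ hr => (mem_upperBounds_pair.1 hr).2⟩

end PairBounds

section FinitePoset

variable {P : Type*} [PartialOrder P] [Finite P]

theorem exists_isLUB_of_exists_isLUB_pair [OrderBot P] (hpair : ∀ a b : P, ∃ j, IsLUB {a, b} j)
    (s : Set P) : ∃ j, IsLUB s j := by
  induction s, Set.toFinite s using Set.Finite.induction_on with
  | empty => exact ⟨⊥, isLUB_empty⟩
  | @insert a s _ _ ih =>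
    obtain ⟨b, hb⟩ := ih
    obtain ⟨j, hj⟩ := hpair a b
    refine ⟨j, (isLUB_congr ?_).1 hj⟩
    rw [upperBounds_insert, upperBounds_insert, upperBounds_singleton, hb.upperBounds_eq]

theorem exists_isGLB_pair_of_exists_isLUB_pair [OrderBot P]
    (hpair : ∀ a b : P, ∃ j, IsLUB {a, b} j) (a b : P) : ∃ m, IsGLB {a, b} m :=
  (exists_isLUB_of_exists_isLUB_pair hpair _).imp fun _ => isLUB_lowerBounds.mp

theorem isGLB_of_forall_covBy_exists_not_le (hpair : ∀ a b : P, ∃ j, IsLUB {a, b} j)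
    {S : Set P} {x : P} (hS : ∀ s ∈ S, x ≤ s) (hcov : ∀ u, x ⋖ u → ∃ s ∈ S, ¬ u ≤ s) :
    IsGLB S x := by
  refine ⟨hS, fun y hy => ?_⟩
  obtain ⟨j, hj⟩ := hpair y x
  obtain ⟨hyj, hxj⟩ := mem_upperBounds_pair.1 hj.1
  obtain rfl | hxj := hxj.eq_or_lt
  · exact hyj
  obtain ⟨u, hxu, huj⟩ := exists_covBy_le_of_lt hxj
  obtain ⟨s, hsS, hus⟩ := hcov u hxu
  have hjs : j ≤ s := hj.2 (mem_upperBounds_pair.2 ⟨hy hsS, hS s hsS⟩)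
  exact absurd (huj.trans hjs) hus

end FinitePoset

theorem MeetIrred.eq_of_covBy {P : Type*} [PartialOrder P] {m p q : P} (hm : MeetIrred m)
    (hp : m ⋖ p) (hq : m ⋖ q) : p = q := by
  rcases hm with ⟨r, -, hr⟩ | htop
  · exact (hr p hp).trans (hr q hq).symm
  · exact absurd (htop p) hp.lt.not_ge

/-- The diamond produced by (U2). -/
structure IsDiamond {P κ : Type*} [PartialOrder P] (c : P → P → κ) (x u w z : P) : Prop where
  covBy_left : x ⋖ u
  covBy_right : x ⋖ w
  ne : u ≠ w
  left_covBy : u ⋖ z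
  right_covBy : w ⋖ z
  color_left : c x u = c w z
  color_right : c x w = c u z

def DiamondTopLE {P κ : Type*} [PartialOrder P] (c : P → P → κ) (x t : P) : Prop :=
  ∀ u w z, IsDiamond c x u w z → u ≤ t → w ≤ t → z ≤ t

def CoverMeetAbove {P : Type*} [PartialOrder P] (v : P) : Prop :=
  ∀ t r r' y : P, v ≤ t → t ⋖ r → t ⋖ r' → r ≠ r' → v ≤ y → y ≤ r → y ≤ r' → y ≤ t

namespace UColoring

variable {P κ : Type*} [PartialOrder P] {c : P → P → κ} (hU : UColoring (· ⋖ ·) c)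
include hU

theorem eq_of_covBy_of_color_eq {w p q : P} (hp : w ⋖ p) (hq : w ⋖ q) (h : c w p = c w q) :
    p = q :=
  by_contra fun hpq => hU.1 w p q hp hq hpq h

theorem exists_isDiamond {x u w : P} (hu : x ⋖ u) (hw : x ⋖ w) (huw : u ≠ w) :
    ∃ z, IsDiamond c x u w z :=
  let ⟨z, h₁, h₂, h₃, h₄⟩ := hU.2 x u w hu hw huw
  ⟨z, hu, hw, huw, h₁, h₂, h₃, h₄⟩

variable [Finite P]

theorem exists_lift {x u w : P} (hxu : x ⋖ u) (hxw : x ≤ w) (huw : ¬ u ≤ w) :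
    ∃ p, w ⋖ p ∧ u ≤ p ∧ c w p = c x u := by
  induction w using WellFoundedLT.induction with
  | ind w ih =>
  obtain rfl | hxw := hxw.eq_or_lt
  · exact ⟨u, hxu, le_rfl, rfl⟩
  obtain ⟨w₁, hxw₁, hw₁w⟩ := exists_le_covBy_of_lt hxw
  obtain ⟨p₁, hw₁p₁, hup₁, hc₁⟩ := ih w₁ hw₁w.lt hxw₁ fun h => huw (h.trans hw₁w.le)
  have hp₁w : p₁ ≠ w := fun h => huw (h ▸ hup₁)
  obtain ⟨z, hz⟩ := hU.exists_isDiamond hw₁p₁ hw₁w hp₁w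
  exact ⟨z, hz.right_covBy, hup₁.trans hz.left_covBy.le, hz.color_left ▸ hc₁⟩

theorem le_of_le_covBy_of_le_covBy {v t r r' y : P} (hM : ∀ v', v < v' → CoverMeetAbove v')
    (hvt : v ≤ t) (htr : t ⋖ r) (htr' : t ⋖ r') (hrr' : r ≠ r')
    (hBr : DiamondTopLE c v r) (hBr' : DiamondTopLE c v r')
    (hvy : v ≤ y) (hyr : y ≤ r) (hyr' : y ≤ r') : y ≤ t := by
  induction y using WellFoundedLT.induction with
  | ind y ih =>
  obtain rfl | hvy := hvy.eq_or_lt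
  · exact hvt
  obtain ⟨v₁, hvv₁, hv₁y⟩ := exists_le_covBy_of_lt hvy
  have hv₁t : v₁ ≤ t := ih v₁ hv₁y.lt hvv₁ (hv₁y.le.trans hyr) (hv₁y.le.trans hyr')
  obtain rfl | hvv₁ := hvv₁.eq_or_lt
  · obtain rfl | hvt := hvt.eq_or_lt
    · have hyr : y = r := (htr.eq_or_eq hv₁y.le hyr).resolve_left hv₁y.ne'
      have hyr' : y = r' := (htr'.eq_or_eq hv₁y.le hyr').resolve_left hv₁y.ne'
      exact absurd (hyr.symm.trans hyr') hrr'
    -- `y` is an atom above `v`: complete it with an atom `t₁ ≤ t` to a diamond.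
    obtain ⟨t₁, hvt₁, ht₁t⟩ := exists_covBy_le_of_lt hvt
    obtain rfl | hyt₁ := eq_or_ne y t₁
    · exact ht₁t
    obtain ⟨z, hz⟩ := hU.exists_isDiamond hv₁y hvt₁ hyt₁
    have hzr := hBr y t₁ z hz hyr (ht₁t.trans htr.le)
    have hzr' := hBr' y t₁ z hz hyr' (ht₁t.trans htr'.le)
    exact hz.left_covBy.le.trans
      (hM t₁ hvt₁.lt t r r' z ht₁t htr htr' hrr' hz.right_covBy.le hzr hzr')
  · exact hM v₁ hvv₁ t r r' y hv₁t htr htr' hrr' hv₁y.le hyr hyr'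

theorem diamondTopLE {v : P} (hM : ∀ v', v < v' → CoverMeetAbove v') (t : P) :
    DiamondTopLE c v t := by
  induction t using WellFoundedGT.induction with
  | ind t ih =>
  intro u w z hz hut hwt
  by_contra hzt
  obtain ⟨r, htr, hzr, hcr⟩ := hU.exists_lift hz.left_covBy hut hzt
  obtain ⟨r', htr', hzr', hcr'⟩ := hU.exists_lift hz.right_covBy hwt hzt
  -- the two lifts carry the distinct colors `c v w` and `c v u`
  have hrr' : r ≠ r' := by
    rintro rfl
    exact hU.1 v u w hz.covBy_left hz.covBy_right hz.ne
      (by rw [hz.color_left, hz.color_right, ← hcr, ← hcr'])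
  exact hzt (hU.le_of_le_covBy_of_le_covBy hM (hz.covBy_left.le.trans hut) htr htr' hrr'
    (ih r htr.lt) (ih r' htr'.lt) (hz.covBy_left.le.trans hz.left_covBy.le) hzr hzr')

theorem coverMeetAbove_and_diamondTopLE (v : P) :
    CoverMeetAbove v ∧ ∀ t, DiamondTopLE c v t := by
  induction v using WellFoundedGT.induction with
  | ind v ih =>
  have hM : ∀ v', v < v' → CoverMeetAbove v' := fun v' h => (ih v' h).1
  have hB := hU.diamondTopLE hM
  exact ⟨fun t r r' y hvt htr htr' hrr' =>
    hU.le_of_le_covBy_of_le_covBy hM hvt htr htr' hrr' (hB r) (hB r'), hB⟩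

theorem isLUB_of_isDiamond {x u w z : P} (hz : IsDiamond c x u w z) : IsLUB {u, w} z := by
  refine ⟨mem_upperBounds_pair.2 ⟨hz.left_covBy.le, hz.right_covBy.le⟩, fun t ht => ?_⟩
  obtain ⟨hut, hwt⟩ := mem_upperBounds_pair.1 ht
  exact (hU.coverMeetAbove_and_diamondTopLE x).2 t u w z hz hut hwt

theorem isLUB_of_lift {x u w p : P} (hxu : x ⋖ u) (hxw : x ≤ w) (huw : ¬ u ≤ w)
    (hwp : w ⋖ p) (hup : u ≤ p) (hc : c w p = c x u) : IsLUB {u, w} p := by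
  refine ⟨mem_upperBounds_pair.2 ⟨hup, hwp.le⟩, fun r hr => ?_⟩
  obtain ⟨hur, hwr⟩ := mem_upperBounds_pair.1 hr
  clear hr
  induction w using WellFoundedLT.induction generalizing p with
  | ind w ih =>
  obtain rfl | hxw := hxw.eq_or_lt
  · exact (hU.eq_of_covBy_of_color_eq hwp hxu hc) ▸ hur
  obtain ⟨w₁, hxw₁, hw₁w⟩ := exists_le_covBy_of_lt hxw
  have huw₁ : ¬ u ≤ w₁ := fun h => huw (h.trans hw₁w.le)
  obtain ⟨p₁, hw₁p₁, hup₁, hc₁⟩ := hU.exists_lift hxu hxw₁ huw₁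
  have hp₁r := ih w₁ hw₁w.lt hxw₁ huw₁ hw₁p₁ hup₁ hc₁ (hw₁w.le.trans hwr)
  have hp₁w : p₁ ≠ w := fun h => huw (h ▸ hup₁)
  obtain ⟨z, hz⟩ := hU.exists_isDiamond hw₁p₁ hw₁w hp₁w
  have hzp : z = p :=
    hU.eq_of_covBy_of_color_eq hz.right_covBy hwp (by rw [← hz.color_left, hc₁, hc])
  rw [← hzp]
  exact (hU.isLUB_of_isDiamond hz).2 (mem_upperBounds_pair.2 ⟨hp₁r, hwr⟩)

theorem color_eq_of_covBy_of_le {x u w q : P} (hxu : x ⋖ u) (hxw : x ≤ w) (huw : ¬ u ≤ w)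
    (hwq : w ⋖ q) (huq : u ≤ q) : c w q = c x u := by
  obtain ⟨p, hwp, hup, hc⟩ := hU.exists_lift hxu hxw huw
  have hpq : p ≤ q :=
    (hU.isLUB_of_lift hxu hxw huw hwp hup hc).2 (mem_upperBounds_pair.2 ⟨huq, hwq.le⟩)
  rwa [← (hwq.eq_or_eq hwp.le hpq).resolve_left hwp.ne']

theorem exists_isLUB_pair [OrderBot P] (a b : P) : ∃ j, IsLUB {a, b} j := by
  induction a using WellFoundedLT.induction with
  | ind a ih =>
  obtain rfl | ha := eq_or_ne a ⊥
  · exact ⟨b, isLUB_pair_of_le bot_le⟩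
  obtain ⟨a₁, -, ha₁a⟩ := exists_le_covBy_of_lt (bot_lt_iff_ne_bot.mpr ha)
  obtain ⟨j, hj⟩ := ih a₁ ha₁a.lt
  obtain ⟨ha₁j, hbj⟩ := mem_upperBounds_pair.1 hj.1
  have hub : upperBounds {a, j} = upperBounds {a, b} := by
    ext r
    simp only [mem_upperBounds_pair]
    exact ⟨fun ⟨har, hjr⟩ => ⟨har, hbj.trans hjr⟩,
      fun ⟨har, hbr⟩ => ⟨har, hj.2 (mem_upperBounds_pair.2 ⟨ha₁a.le.trans har, hbr⟩)⟩⟩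
  simp_rw [← isLUB_congr hub]
  by_cases haj : a ≤ j
  · exact ⟨j, isLUB_pair_of_le haj⟩
  obtain ⟨p, hjp, hap, hc⟩ := hU.exists_lift ha₁a ha₁j haj
  exact ⟨p, hU.isLUB_of_lift ha₁a ha₁j haj hjp hap hc⟩

theorem exists_isGreatest_not_ge {x u : P} (hxu : x ⋖ u) :
    ∃ m, IsGreatest {s | x ≤ s ∧ ¬ u ≤ s} m := by
  obtain ⟨m, ⟨hxm, hum⟩, hmax⟩ :=
    (Set.toFinite {s | x ≤ s ∧ ¬ u ≤ s}).exists_maximal ⟨x, le_rfl, hxu.lt.not_ge⟩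
  refine ⟨m, ⟨hxm, hum⟩, ?_⟩
  rintro s ⟨hxs, hus⟩
  induction s using WellFoundedLT.induction with
  | ind s ih =>
  obtain rfl | hxs := hxs.eq_or_lt
  · exact hxm
  obtain ⟨s₁, hxs₁, hs₁s⟩ := exists_le_covBy_of_lt hxs
  have hs₁m := ih s₁ hs₁s.lt hxs₁ fun h => hus (h.trans hs₁s.le)
  by_contra hsm
  -- lifting `s₁ ⋖ s` to `m` leaves the avoiding set, so it is also the lift of `x ⋖ u`
  obtain ⟨p, hmp, hsp, hc⟩ := hU.exists_lift hs₁s hs₁m hsm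
  have hup : u ≤ p := by
    by_contra hup
    exact hmp.lt.not_ge (hmax ⟨hxm.trans hmp.le, hup⟩ hmp.le)
  have hcol : c s₁ s = c x u := hc.symm.trans (hU.color_eq_of_covBy_of_le hxu hxm hum hmp hup)
  obtain ⟨q, hs₁q, huq, hcq⟩ := hU.exists_lift hxu hxs₁ fun h => hus (h.trans hs₁s.le)
  exact hus (hU.eq_of_covBy_of_color_eq hs₁q hs₁s (hcq.trans hcol.symm) ▸ huq)

theorem meetIrred_of_isGreatest {x u m : P} (hxu : x ⋖ u)
    (hm : IsGreatest {s | x ≤ s ∧ ¬ u ≤ s} m) : MeetIrred m := by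
  obtain ⟨⟨hxm, hum⟩, hmax⟩ := hm
  obtain ⟨p, hmp, hup, hc⟩ := hU.exists_lift hxu hxm hum
  refine Or.inl ⟨p, hmp, fun q hmq => hU.eq_of_covBy_of_color_eq hmq hmp ?_⟩
  have huq : u ≤ q := by
    by_contra huq
    exact hmq.lt.not_ge (hmax ⟨hxm.trans hmq.le, huq⟩)
  rw [hU.color_eq_of_covBy_of_le hxu hxm hum hmq huq, hc]

theorem mem_of_isGLB_of_meetIrred {x u m : P} {A : Set P} (hxu : x ⋖ u)
    (hm : IsGreatest {s | x ≤ s ∧ ¬ u ≤ s} m) (hA : ∀ a ∈ A, MeetIrred a) (hAx : IsGLB A x) :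
    m ∈ A := by
  obtain ⟨a, haA, hua⟩ : ∃ a ∈ A, ¬ u ≤ a := by
    by_contra! h
    exact hxu.lt.not_ge (hAx.2 h)
  have hxa : x ≤ a := hAx.1 haA
  obtain rfl | ham := (hm.2 ⟨hxa, hua⟩).eq_or_lt
  · exact haA
  obtain ⟨q, haq, hqm⟩ := exists_covBy_le_of_lt ham
  obtain ⟨p, hap, hup, -⟩ := hU.exists_lift hxu hxa hua
  exact absurd (hup.trans ((hA a haA).eq_of_covBy hap haq ▸ hqm)) hm.1.2

end UColoring

/-- A finite poset with a global minimum whose cover graph admits a U-coloring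
is an upper locally distributive lattice: it is a lattice, and each element `x`
has a unique inclusion-minimal set `M` of meet-irreducibles with `x = ⋀ M`. -/
theorem stmt_7 {P κ : Type} [PartialOrder P] [Fintype P] [OrderBot P]
    (c : P → P → κ) (hU : UColoring (· ⋖ ·) c) :
    (∀ a b : P, (∃ s : P, IsLUB {a, b} s) ∧ (∃ m : P, IsGLB {a, b} m)) ∧
    (∀ x : P, ∃! M : Finset P,
      (∀ m ∈ M, MeetIrred m) ∧ IsGLB (↑M : Set P) x ∧
      (∀ A : Finset P, (∀ m ∈ A, MeetIrred m) → IsGLB (↑A : Set P) x → M ⊆ A)) := by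
  classical
  have hpair := hU.exists_isLUB_pair
  refine ⟨fun a b => ⟨hpair a b, exists_isGLB_pair_of_exists_isLUB_pair hpair a b⟩, fun x => ?_⟩
  set M : Finset P := {m | ∃ u, x ⋖ u ∧ IsGreatest {s | x ≤ s ∧ ¬ u ≤ s} m}
  have hmem (m : P) : m ∈ M ↔ ∃ u, x ⋖ u ∧ IsGreatest {s | x ≤ s ∧ ¬ u ≤ s} m := by simp [M]
  have hirr : ∀ m ∈ M, MeetIrred m := fun m hm => by
    obtain ⟨u, hxu, hm⟩ := (hmem m).1 hm
    exact hU.meetIrred_of_isGreatest hxu hm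
  have hglb : IsGLB (↑M : Set P) x := by
    refine isGLB_of_forall_covBy_exists_not_le hpair (fun m hm => ?_) fun u hxu => ?_
    · obtain ⟨u, -, hm⟩ := (hmem m).1 hm
      exact hm.1.1
    · obtain ⟨m, hm⟩ := hU.exists_isGreatest_not_ge hxu
      exact ⟨m, (hmem m).2 ⟨u, hxu, hm⟩, hm.1.2⟩
  have hmin (A : Finset P) (hA : ∀ m ∈ A, MeetIrred m) (hAx : IsGLB (↑A : Set P) x) : M ⊆ A :=
    fun m hm => by
      obtain ⟨u, hxu, hm⟩ := (hmem m).1 hm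
      exact hU.mem_of_isGLB_of_meetIrred hxu hm hA hAx
  exact ⟨M, ⟨hirr, hglb, hmin⟩, fun A ⟨hA, hAx, hAmin⟩ =>
    (hAmin M hirr hglb).antisymm (hmin A hA hAx)⟩
end

section
/- The cover graph of every finite upper locally distributive lattice admits a U-coloring: coloring each cover x ≺ y by the unique meet-irreducible element in M̄_x \ M̄_y satisfies rules (U1) and (U2). -/
def MeetIrredL {P : Type*} [Lattice P] [OrderTop P] (m : P) : Prop :=
  (∃! u : P, m ⋖ u) ∨ m = ⊤

/-- `Mbar z` is the set of meet-irreducible elements above `z`. -/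
def Mbar {P : Type*} [Lattice P] [OrderTop P] (z : P) : Set P :=
  {m : P | MeetIrredL m ∧ z ≤ m}

/-!
Coloring by `Mbar x \ Mbar y` reduces both rules to set algebra. Since every element is the meet
of the meet-irreducibles above it, `z ↦ Mbar z` is an order-reversing embedding with
`Mbar (a ⊔ b) = Mbar a ∩ Mbar b`, and `a ⋖ b` exactly when `Mbar b` is `Mbar a` minus one point.
That point is unique because each `m ∈ Mbar x \ Mbar y` satisfies `m ⊓ y = x`, so the least
representation of `x` lies in `{m} ∪ R` for every representation `R` of `y`; two such `m` would
put it inside `R`, giving `y ≤ x`. For covers `x ⋖ yᵢ` colored `mᵢ`, the join `y₁ ⊔ y₂` then has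
`Mbar (y₁ ⊔ y₂) = Mbar x \ {m₁, m₂}`, so it covers both `yᵢ` with the colors swapped.
-/

/-- The characterization of upper local distributivity by least meet-irreducible
representations. -/
def UpperLocallyDistributive (P : Type*) [Lattice P] [OrderTop P] : Prop :=
  ∀ x : P, ∃ M : Finset P, (∀ m ∈ M, MeetIrredL m) ∧ x = M.inf id ∧
    (∀ A : Finset P, (∀ m ∈ A, MeetIrredL m) → x = A.inf id → M ⊆ A)

theorem Set.sdiff_eq_singleton_of_sdiff_eq_singleton {α : Type*} {S T₁ T₂ : Set α} {a b : α}
    (hT₁ : T₁ ⊆ S) (h₁ : S \ T₁ = {a}) (h₂ : S \ T₂ = {b}) (hab : a ≠ b) : T₁ \ T₂ = {b} := by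
  have hb : b ∈ S \ T₂ := h₂ ▸ rfl
  refine Set.eq_singleton_iff_unique_mem.2 ⟨⟨?_, hb.2⟩, fun x hx => ?_⟩
  · by_contra hbT₁
    refine hab (Eq.symm ?_)
    rw [← Set.mem_singleton_iff, ← h₁]
    exact ⟨hb.1, hbT₁⟩
  · rw [← Set.mem_singleton_iff, ← h₂]
    exact ⟨hT₁ hx.1, hx.2⟩

section Mbar

variable {P : Type*} [Lattice P] [OrderTop P]

theorem Mbar_sup (a b : P) : Mbar (a ⊔ b) = Mbar a ∩ Mbar b := by
  ext m
  simp only [Mbar, Set.mem_ofPred_eq, Set.mem_inter_iff, sup_le_iff]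
  tauto

theorem Mbar_antitone : Antitone (Mbar : P → Set P) :=
  fun _ _ hab _ hm => ⟨hm.1, hab.trans hm.2⟩

theorem Mbar_subset_Mbar_iff
    (hrepr : ∀ x : P, ∃ M : Finset P, (∀ m ∈ M, MeetIrredL m) ∧ x = M.inf id) {a b : P} :
    Mbar b ⊆ Mbar a ↔ a ≤ b := by
  refine ⟨fun hsub => ?_, fun hab => Mbar_antitone hab⟩
  obtain ⟨M, hM, rfl⟩ := hrepr b
  exact Finset.le_inf fun m hm => (hsub ⟨hM m hm, Finset.inf_le hm⟩).2

theorem Mbar_injective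
    (hrepr : ∀ x : P, ∃ M : Finset P, (∀ m ∈ M, MeetIrredL m) ∧ x = M.inf id) :
    Function.Injective (Mbar : P → Set P) := fun _ _ h =>
  le_antisymm ((Mbar_subset_Mbar_iff hrepr).1 h.ge) ((Mbar_subset_Mbar_iff hrepr).1 h.le)

theorem covBy_of_Mbar_sdiff_eq_singleton
    (hrepr : ∀ x : P, ∃ M : Finset P, (∀ m ∈ M, MeetIrredL m) ∧ x = M.inf id)
    {a b m : P} (hab : a ≤ b) (h : Mbar a \ Mbar b = {m}) : a ⋖ b := by
  have hm : m ∈ Mbar a \ Mbar b := h ▸ rfl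
  refine ⟨lt_of_le_not_ge hab fun hba => hm.2 (Mbar_antitone hba hm.1), fun w haw hwb => ?_⟩
  obtain ⟨p, hpa, hpw⟩ := Set.not_subset.1 ((Mbar_subset_Mbar_iff hrepr).not.2 haw.not_ge)
  obtain ⟨q, hqw, hqb⟩ := Set.not_subset.1 ((Mbar_subset_Mbar_iff hrepr).not.2 hwb.not_ge)
  have hp : p ∈ Mbar a \ Mbar b := ⟨hpa, fun hpb => hpw (Mbar_antitone hwb.le hpb)⟩
  have hq : q ∈ Mbar a \ Mbar b := ⟨Mbar_antitone haw.le hqw, hqb⟩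
  rw [h] at hp hq
  exact hpw (hp.trans hq.symm ▸ hqw)

noncomputable def coverColor (x y : P) : P :=
  @Classical.epsilon _ ⟨x⟩ fun m => Mbar x \ Mbar y = {m}

theorem Mbar_sdiff_eq_singleton_coverColor {x y : P} (h : ∃ m, Mbar x \ Mbar y = {m}) :
    Mbar x \ Mbar y = {coverColor x y} :=
  Classical.epsilon_spec h

end Mbar

namespace UpperLocallyDistributive

variable {P : Type*} [Lattice P] [OrderTop P]

theorem exists_inf_eq (hP : UpperLocallyDistributive P) (x : P) :
    ∃ M : Finset P, (∀ m ∈ M, MeetIrredL m) ∧ x = M.inf id :=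
  (hP x).imp fun _ hM => ⟨hM.1, hM.2.1⟩

theorem Mbar_sdiff_subsingleton_of_covBy (hP : UpperLocallyDistributive P) {x y : P}
    (hxy : x ⋖ y) : (Mbar x \ Mbar y).Subsingleton := by
  classical
  obtain ⟨M, -, hxM, hleast⟩ := hP x
  obtain ⟨R, hR, hyR, -⟩ := hP y
  have hM_subset : ∀ m ∈ Mbar x \ Mbar y, M ⊆ insert m R := by
    intro m hm
    have hmeet : m ⊓ y = x :=
      (hxy.eq_or_eq (le_inf hm.1.2 hxy.le) inf_le_right).resolve_right
        fun h => hm.2 ⟨hm.1.1, h ▸ inf_le_left⟩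
    refine hleast _ (fun n hn => ?_) ?_
    · rcases Finset.mem_insert.1 hn with rfl | hn
      exacts [hm.1.1, hR n hn]
    · rw [Finset.inf_insert, id, ← hyR, hmeet]
  intro m hm m' hm'
  by_contra hne
  have hMR : M ⊆ R := by
    intro n hn
    rcases Finset.mem_insert.1 (hM_subset m hm hn) with rfl | hnR
    · exact (Finset.mem_insert.1 (hM_subset m' hm' hn)).resolve_left hne
    · exact hnR
  exact hxy.lt.not_ge (hxM ▸ hyR ▸ Finset.inf_mono hMR)

theorem Mbar_sdiff_coverColor_of_covBy (hP : UpperLocallyDistributive P) {x y : P}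
    (hxy : x ⋖ y) : Mbar x \ Mbar y = {coverColor x y} := by
  have hne : (Mbar x \ Mbar y).Nonempty :=
    Set.sdiff_nonempty.2 ((Mbar_subset_Mbar_iff hP.exists_inf_eq).not.2 hxy.lt.not_ge)
  exact Mbar_sdiff_eq_singleton_coverColor
    (Set.exists_eq_singleton_iff_nonempty_subsingleton.2
      ⟨hne, hP.Mbar_sdiff_subsingleton_of_covBy hxy⟩)

theorem coverColor_mem_Mbar_sdiff (hP : UpperLocallyDistributive P) {x y : P} (hxy : x ⋖ y) :
    coverColor x y ∈ Mbar x \ Mbar y :=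
  (hP.Mbar_sdiff_coverColor_of_covBy hxy).symm ▸ rfl

theorem Mbar_eq_sdiff_coverColor (hP : UpperLocallyDistributive P) {x y : P} (hxy : x ⋖ y) :
    Mbar y = Mbar x \ {coverColor x y} := by
  rw [← hP.Mbar_sdiff_coverColor_of_covBy hxy, Set.sdiff_sdiff_cancel_left (Mbar_antitone hxy.le)]

theorem coverColor_ne_of_covBy (hP : UpperLocallyDistributive P) {x y₁ y₂ : P} (h₁ : x ⋖ y₁)
    (h₂ : x ⋖ y₂) (hne : y₁ ≠ y₂) : coverColor x y₁ ≠ coverColor x y₂ := fun hc =>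
  hne <| Mbar_injective hP.exists_inf_eq <| by
    rw [hP.Mbar_eq_sdiff_coverColor h₁, hP.Mbar_eq_sdiff_coverColor h₂, hc]

theorem Mbar_sdiff_Mbar_sup (hP : UpperLocallyDistributive P) {x y₁ y₂ : P} (h₁ : x ⋖ y₁)
    (h₂ : x ⋖ y₂) (hne : y₁ ≠ y₂) : Mbar y₁ \ Mbar (y₁ ⊔ y₂) = {coverColor x y₂} := by
  rw [Mbar_sup, Set.sdiff_self_inter]
  exact Set.sdiff_eq_singleton_of_sdiff_eq_singleton (Mbar_antitone h₁.le)
    (hP.Mbar_sdiff_coverColor_of_covBy h₁) (hP.Mbar_sdiff_coverColor_of_covBy h₂)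
    (hP.coverColor_ne_of_covBy h₁ h₂ hne)

theorem exists_covBy_coverColor_swap (hP : UpperLocallyDistributive P) {x y₁ y₂ : P}
    (h₁ : x ⋖ y₁) (h₂ : x ⋖ y₂) (hne : y₁ ≠ y₂) :
    ∃ z, y₁ ⋖ z ∧ y₂ ⋖ z ∧ coverColor x y₁ = coverColor y₂ z ∧
      coverColor x y₂ = coverColor y₁ z := by
  have hd₁ := hP.Mbar_sdiff_Mbar_sup h₁ h₂ hne
  have hd₂ : Mbar y₂ \ Mbar (y₁ ⊔ y₂) = {coverColor x y₁} :=
    sup_comm y₁ y₂ ▸ hP.Mbar_sdiff_Mbar_sup h₂ h₁ hne.symm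
  have hc₁ : y₁ ⋖ y₁ ⊔ y₂ := covBy_of_Mbar_sdiff_eq_singleton hP.exists_inf_eq le_sup_left hd₁
  have hc₂ : y₂ ⋖ y₁ ⊔ y₂ := covBy_of_Mbar_sdiff_eq_singleton hP.exists_inf_eq le_sup_right hd₂
  refine ⟨y₁ ⊔ y₂, hc₁, hc₂, ?_, ?_⟩
  · exact Set.singleton_injective (hd₂.symm.trans (hP.Mbar_sdiff_coverColor_of_covBy hc₂))
  · exact Set.singleton_injective (hd₁.symm.trans (hP.Mbar_sdiff_coverColor_of_covBy hc₁))

end UpperLocallyDistributive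

theorem stmt_9_general {P : Type} [Lattice P] [BoundedOrder P]
    (hULD : ∀ x : P, ∃ M : Finset P, (∀ m ∈ M, MeetIrredL m) ∧ x = M.inf id ∧
      (∀ A : Finset P, (∀ m ∈ A, MeetIrredL m) → x = A.inf id → M ⊆ A)) :
    ∃ c : P → P → P,
      (∀ x y : P, x ⋖ y → c x y ∈ Mbar x \ Mbar y) ∧
      UColoring (· ⋖ ·) c := by
  have hP : UpperLocallyDistributive P := hULD
  exact ⟨coverColor, fun _ _ => hP.coverColor_mem_Mbar_sdiff,
    fun _ _ _ => hP.coverColor_ne_of_covBy, fun _ _ _ => hP.exists_covBy_coverColor_swap⟩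

/-- The cover graph of a finite ULD lattice admits a U-coloring: coloring each
cover `x ⋖ y` by the unique meet-irreducible in `Mbar x \ Mbar y` satisfies
(U1) and (U2). -/
theorem stmt_9 {P : Type} [Lattice P] [Fintype P] [BoundedOrder P]
    (hULD : ∀ x : P, ∃ M : Finset P, (∀ m ∈ M, MeetIrredL m) ∧ x = M.inf id ∧
      (∀ A : Finset P, (∀ m ∈ A, MeetIrredL m) → x = A.inf id → M ⊆ A)) :
    ∃ c : P → P → P,
      (∀ x y : P, x ⋖ y → c x y ∈ Mbar x \ Mbar y) ∧
      UColoring (· ⋖ ·) c :=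
  stmt_9_general hULD
end
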